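/- (Finite-volume generalized Peierls–Griffiths bound.) Consider the zero-field Ising model on a finite connected simple graph G = (V,E) with couplings J(e) ≥ J_min > 0 at inverse temperature β > 0. The Gibbs expectation of the modulus of the magnetization satisfies E_β[ |M| ] ≥ 1 − (4/|V|) Σ_{p∈V} Σ_{b=1}^{|E|} μ^p(b) · e^{−2 β J_min b}. -/

import Mathlib

/-!
Call `p` enclosed in a configuration `σ` if it is internal to some border all of whose edges are
disagreement edges of `σ`. Let `s` be a minority spin. If some vertex `p` of spin `s` is not
enclosed, then every vertex `q` of the other spin is: `q` lies in a component `C` of the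
complement of the spin cluster of `p`, the edges leaving `C` form a border of disagreement edges
separating `p` from `q`, and one of the two lies on the smaller side. Hence the minority class,
of size `n (1 - |M|) / 2`, is no larger than the set of enclosed vertices.

Peierls' argument bounds the probability that a given border `B` consists of disagreement edges
by `exp (-2 β Jmin |B|)`: flipping one side of `B` is injective and lowers the energy by at least
`2 Jmin |B|`. A union bound over the borders internal to `p`, summed over `p`, gives the bound.
-/

open scoped BigOperators Classical

namespace PG

variable {V : Type*}

/-- The product of the spins at the two endpoints of an unordered pair. -/
def spinProd (σ : V → ℤ) : Sym2 V → ℤ :=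
  Sym2.lift ⟨fun i j => σ i * σ j, fun i j => mul_comm (σ i) (σ j)⟩

/-- The spins at the two endpoints of an unordered pair disagree. -/
def Disagrees (σ : V → ℤ) : Sym2 V → Prop :=
  Sym2.lift ⟨fun i j => σ i ≠ σ j, fun i j => propext ne_comm⟩

/-- The disagreement edge set D(σ) of a spin configuration. -/
def disagreeSet (G : SimpleGraph V) (σ : V → ℤ) : Set (Sym2 V) :=
  {e | e ∈ G.edgeSet ∧ Disagrees σ e}

/-- A spin configuration takes values ±1. -/
def IsSpin (σ : V → ℤ) : Prop := ∀ v, σ v = 1 ∨ σ v = -1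

/-- `B` is a border of `G` with sides `P₁`, `P₂`. -/
structure IsBorderWith (G : SimpleGraph V) (B : Set (Sym2 V)) (P₁ P₂ : Set V) : Prop where
  disj : Disjoint P₁ P₂
  cover : P₁ ∪ P₂ = Set.univ
  ne₁ : P₁.Nonempty
  ne₂ : P₂.Nonempty
  conn₁ : (G.induce P₁).Connected
  conn₂ : (G.induce P₂).Connected
  eq_edges : B = {e | e ∈ G.edgeSet ∧ ∃ i ∈ P₁, ∃ j ∈ P₂, e = s(i, j)}

/-- `B` is a border of `G`. -/
def IsBorder (G : SimpleGraph V) (B : Set (Sym2 V)) : Prop :=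
  ∃ P₁ P₂ : Set V, IsBorderWith G B P₁ P₂

/-- `p` is internal to the border `B`: it lies on the side with no more vertices. -/
def InternalTo (G : SimpleGraph V) (p : V) (B : Set (Sym2 V)) : Prop :=
  ∃ P₁ P₂ : Set V, IsBorderWith G B P₁ P₂ ∧ p ∈ P₁ ∧ P₁.ncard ≤ P₂.ncard

/-- μ^p(b): the number of borders of cardinality `b` to which `p` is internal. -/
noncomputable def mu (G : SimpleGraph V) (p : V) (b : ℕ) : ℕ :=
  {B : Finset (Sym2 V) | B.card = b ∧ InternalTo G p ↑B}.ncard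

/-- The vertex border of `B` on side `P`: endpoints of edges of `B` lying in `P`. -/
def vertexBorder (B : Set (Sym2 V)) (P : Set V) : Set V :=
  {v | v ∈ P ∧ ∃ e ∈ B, v ∈ e}

/-- Encoding of spin configurations by boolean functions. -/
def toSpin (τ : V → Bool) : V → ℤ := fun v => if τ v then 1 else -1

/-- The zero-field Ising Hamiltonian. -/
noncomputable def hamiltonian [Fintype V] (G : SimpleGraph V) [Fintype G.edgeSet]
    (J : Sym2 V → ℝ) (σ : V → ℤ) : ℝ :=
  -∑ e ∈ G.edgeFinset, J e * (spinProd σ e : ℝ)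

/-- The partition function Z at inverse temperature β. -/
noncomputable def partitionZ [Fintype V] [DecidableEq V] (G : SimpleGraph V)
    [Fintype G.edgeSet] (J : Sym2 V → ℝ) (β : ℝ) : ℝ :=
  ∑ τ : V → Bool, Real.exp (-β * hamiltonian G J (toSpin τ))

/-- Gibbs expectation of an observable `f` at inverse temperature β. -/
noncomputable def gibbsExp [Fintype V] [DecidableEq V] (G : SimpleGraph V)
    [Fintype G.edgeSet] (J : Sym2 V → ℝ) (β : ℝ) (f : (V → ℤ) → ℝ) : ℝ :=
  (∑ τ : V → Bool, f (toSpin τ) * Real.exp (-β * hamiltonian G J (toSpin τ))) /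
    partitionZ G J β

/-- Gibbs probability of an event `S` at inverse temperature β. -/
noncomputable def gibbsProb [Fintype V] [DecidableEq V] (G : SimpleGraph V)
    [Fintype G.edgeSet] (J : Sym2 V → ℝ) (β : ℝ) (S : (V → ℤ) → Prop) : ℝ :=
  gibbsExp G J β (fun σ => if S σ then 1 else 0)

/-- The magnetization M(σ). -/
noncomputable def magn [Fintype V] (σ : V → ℤ) : ℝ :=
  (∑ i, (σ i : ℝ)) / (Fintype.card V : ℝ)

/-- The external vertex boundary of a set of vertices. -/
def extBoundary (G : SimpleGraph V) (A : Set V) : Set V :=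
  {v | v ∉ A ∧ ∃ a ∈ A, G.Adj v a}

/-- A (C,d)-isoperimetric inequality. -/
def IsoIneq (G : SimpleGraph V) (C d : ℝ) : Prop :=
  ∀ A : Set V, A.Finite → A.Nonempty → A ≠ Set.univ →
    (extBoundary G A).Infinite ∨
      C * (A.ncard : ℝ) ^ ((d - 1) / d) ≤ ((extBoundary G A).ncard : ℝ)

/-- `G` has growth exponent `df`: balls of radius `r ≥ 1` contain at most `r^df` vertices. -/
def HasGrowth (G : SimpleGraph V) (df : ℝ) : Prop :=
  ∀ p : V, ∀ r : ℕ, 1 ≤ r → (({q : V | G.dist p q ≤ r}).ncard : ℝ) ≤ (r : ℝ) ^ df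

/-- ν_q(b): the number of vertex sets containing `q` arising as a vertex border of a
border of cardinality `b`. -/
noncomputable def nu (G : SimpleGraph V) (q : V) (b : ℕ) : ℕ :=
  {S : Set V | q ∈ S ∧ ∃ (B : Finset (Sym2 V)) (P₁ P₂ : Set V),
    IsBorderWith G ↑B P₁ P₂ ∧ B.card = b ∧ S = vertexBorder ↑B P₂}.ncard

open Finset

section Clusters

variable {G : SimpleGraph V}

variable (G) in
/-- The vertex set of the component of `p` in `G.induce S`; it is `{p}` when `p ∉ S`. -/
def componentIn (S : Set V) (p : V) : Set V :=
  {v | Relation.ReflTransGen (fun x y => G.Adj x y ∧ x ∈ S ∧ y ∈ S) p v}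

theorem mem_componentIn_self (S : Set V) (p : V) : p ∈ componentIn G S p :=
  Relation.ReflTransGen.refl

theorem componentIn_subset {S : Set V} {p : V} (hp : p ∈ S) : componentIn G S p ⊆ S := by
  intro v hv
  induction hv with
  | refl => exact hp
  | tail _ h _ => exact h.2.2

theorem mem_componentIn_of_adj {S : Set V} {p v w : V} (hp : p ∈ S)
    (hv : v ∈ componentIn G S p) (hw : w ∈ S) (hadj : G.Adj v w) : w ∈ componentIn G S p :=
  hv.tail ⟨hadj, componentIn_subset hp hv, hw⟩

theorem connected_induce_componentIn {S : Set V} {p : V} :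
    (G.induce (componentIn G S p)).Connected := by
  have fromP : ∀ v (hv : v ∈ componentIn G S p),
      (G.induce (componentIn G S p)).Reachable ⟨p, mem_componentIn_self S p⟩ ⟨v, hv⟩ := by
    intro v hv
    induction hv with
    | refl => rfl
    | @tail b c hb hbc ih =>
      have hadj : (G.induce (componentIn G S p)).Adj ⟨b, hb⟩ ⟨c, hb.tail hbc⟩ := hbc.1
      exact ih.trans hadj.reachable
  have : Nonempty (componentIn G S p) := ⟨⟨p, mem_componentIn_self S p⟩⟩
  exact .mk fun x y => (fromP x x.2).symm.trans (fromP y y.2)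

/-- Every vertex outside the component walks to `P` without entering the component. -/
theorem connected_induce_compl_componentIn (hG : G.Connected) {P : Set V}
    (hP : (G.induce P).Connected) {c : V} (hc : c ∉ P) :
    (G.induce (componentIn G Pᶜ c)ᶜ).Connected := by
  set C := componentIn G Pᶜ c
  have hPC : P ⊆ Cᶜ := fun x hx hxC => componentIn_subset hc hxC hx
  obtain ⟨⟨p, hp⟩⟩ := hP.nonempty
  have walkToP : ∀ u w (W : G.Walk u w) (hw : w ∈ P) (hu : u ∈ Cᶜ),
      (G.induce Cᶜ).Reachable ⟨u, hu⟩ ⟨w, hPC hw⟩ := by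
    intro u w W
    induction W with
    | nil => exact fun _ _ => .rfl
    | @cons u v w hadj W ih =>
      intro hw hu
      by_cases huP : u ∈ P
      · exact (hP.preconnected ⟨u, huP⟩ ⟨w, hw⟩).map (G.induceHomOfLE hPC).toHom
      · have hv : v ∈ Cᶜ := fun hv => hu (mem_componentIn_of_adj hc hv huP hadj.symm)
        have hadj' : (G.induce Cᶜ).Adj ⟨u, hu⟩ ⟨v, hv⟩ := hadj
        exact hadj'.reachable.trans (ih hw hv)
  have toP : ∀ u (hu : u ∈ Cᶜ), (G.induce Cᶜ).Reachable ⟨u, hu⟩ ⟨p, hPC hp⟩ :=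
    fun u => walkToP u p (hG.preconnected u p).some hp
  have : Nonempty (Cᶜ : Set V) := ⟨⟨p, hPC hp⟩⟩
  exact .mk fun x y => (toP x x.2).trans (toP y y.2).symm

end Clusters

section Borders

variable {G : SimpleGraph V}

variable (G) in
def edgesBetween (P₁ P₂ : Set V) : Set (Sym2 V) :=
  {e | e ∈ G.edgeSet ∧ ∃ i ∈ P₁, ∃ j ∈ P₂, e = s(i, j)}

namespace IsBorderWith

variable {B : Set (Sym2 V)} {P₁ P₂ : Set V}

theorem symm (h : IsBorderWith G B P₁ P₂) : IsBorderWith G B P₂ P₁ where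
  disj := h.disj.symm
  cover := Set.union_comm P₂ P₁ ▸ h.cover
  ne₁ := h.ne₂
  ne₂ := h.ne₁
  conn₁ := h.conn₂
  conn₂ := h.conn₁
  eq_edges := by
    rw [h.eq_edges]
    ext e
    constructor <;>
    · rintro ⟨he, i, hi, j, hj, rfl⟩
      exact ⟨he, j, hj, i, hi, Sym2.eq_swap⟩

theorem mem_right_iff (h : IsBorderWith G B P₁ P₂) (v : V) : v ∈ P₂ ↔ v ∉ P₁ := by
  rcases (h.cover ▸ Set.mem_univ v : v ∈ P₁ ∪ P₂) with hv | hv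
  · exact iff_of_false (Set.disjoint_left.mp h.disj hv) (not_not_intro hv)
  · exact iff_of_true hv (Set.disjoint_right.mp h.disj hv)

theorem mk_mem_iff (h : IsBorderWith G B P₁ P₂) {i j : V} (hij : G.Adj i j) :
    s(i, j) ∈ B ↔ ¬(i ∈ P₁ ↔ j ∈ P₁) := by
  rw [h.eq_edges]
  change (s(i, j) ∈ G.edgeSet ∧ ∃ i' ∈ P₁, ∃ j' ∈ P₂, s(i, j) = s(i', j')) ↔ _
  simp only [SimpleGraph.mem_edgeSet, hij, true_and, Sym2.eq_iff, h.mem_right_iff]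
  constructor
  · rintro ⟨i', hi', j', hj', ⟨rfl, rfl⟩ | ⟨rfl, rfl⟩⟩ <;> tauto
  · intro hne
    by_cases hi : i ∈ P₁
    · exact ⟨i, hi, j, fun hj => hne (iff_of_true hi hj), .inl ⟨rfl, rfl⟩⟩
    · exact ⟨j, by tauto, i, hi, .inr ⟨rfl, rfl⟩⟩

theorem subset_edgeSet (h : IsBorderWith G B P₁ P₂) : B ⊆ G.edgeSet := by
  rw [h.eq_edges]
  exact fun e he => he.1

theorem nonempty (hG : G.Connected) (h : IsBorderWith G B P₁ P₂) : B.Nonempty := by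
  obtain ⟨p₁, hp₁⟩ := h.ne₁
  obtain ⟨p₂, hp₂⟩ := h.ne₂
  obtain ⟨W⟩ := hG.preconnected p₁ p₂
  obtain ⟨d, -, hd₁, hd₂⟩ := W.exists_boundary_dart P₁ hp₁ ((h.mem_right_iff p₂).mp hp₂)
  exact ⟨_, (h.mk_mem_iff d.adj).mpr (by tauto)⟩

end IsBorderWith

theorem isBorderWith_compl_componentIn (hG : G.Connected) {P : Set V}
    (hP : (G.induce P).Connected) {c : V} (hc : c ∉ P) :
    IsBorderWith G (edgesBetween G (componentIn G Pᶜ c)ᶜ (componentIn G Pᶜ c))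
      (componentIn G Pᶜ c)ᶜ (componentIn G Pᶜ c) where
  disj := disjoint_compl_left
  cover := Set.compl_union_self _
  ne₁ := by
    obtain ⟨⟨p, hp⟩⟩ := hP.nonempty
    exact ⟨p, fun hpC => componentIn_subset hc hpC hp⟩
  ne₂ := ⟨c, mem_componentIn_self _ c⟩
  conn₁ := connected_induce_compl_componentIn hG hP hc
  conn₂ := connected_induce_componentIn
  eq_edges := rfl

/-- An edge leaving a component `C` of the complement of the cluster `P` of `p` has its outer
endpoint in `P` (as `C` is a component of `Pᶜ`) and its inner endpoint outside `{σ = σ p}`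
(as `P` is a component of that set). -/
theorem edgesBetween_compl_componentIn_subset_disagreeSet (σ : V → ℤ) {p q : V}
    (hq : q ∉ componentIn G {v | σ v = σ p} p) :
    edgesBetween G (componentIn G (componentIn G {v | σ v = σ p} p)ᶜ q)ᶜ
      (componentIn G (componentIn G {v | σ v = σ p} p)ᶜ q) ⊆ disagreeSet G σ := by
  set P := componentIn G {v | σ v = σ p} p
  rintro _ ⟨he, i, hi, j, hj, rfl⟩
  have hadj : G.Adj i j := he
  have hiP : i ∈ P := by
    by_contra hiP
    exact hi (mem_componentIn_of_adj hq hj hiP hadj.symm)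
  have hjP : j ∉ P := componentIn_subset hq hj
  have hiσ : σ i = σ p := componentIn_subset (S := {v | σ v = σ p}) rfl hiP
  exact ⟨he, fun hij => hjP (mem_componentIn_of_adj rfl hiP (hij.symm.trans hiσ) hadj)⟩

end Borders

section Counting

variable {G : SimpleGraph V}

variable (G) in
def Enclosed (σ : V → ℤ) (p : V) : Prop :=
  ∃ B : Finset (Sym2 V), ↑B ⊆ disagreeSet G σ ∧ InternalTo G p ↑B

variable [Fintype V]

theorem enclosed_or_enclosed_of_notMem_componentIn (hG : G.Connected) (σ : V → ℤ)
    {p q : V} (hq : q ∉ componentIn G {v | σ v = σ p} p) :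
    Enclosed G σ p ∨ Enclosed G σ q := by
  set C := componentIn G (componentIn G {v | σ v = σ p} p)ᶜ q
  have hB := isBorderWith_compl_componentIn hG connected_induce_componentIn hq
  have hD := edgesBetween_compl_componentIn_subset_disagreeSet σ hq
  rw [← Set.coe_toFinset (edgesBetween G Cᶜ C)] at hB hD
  rcases le_total C.ncard Cᶜ.ncard with h | h
  · exact .inr ⟨_, hD, C, Cᶜ, hB.symm, mem_componentIn_self _ q, h⟩
  · have hpC : p ∈ Cᶜ := fun hpC => componentIn_subset hq hpC (mem_componentIn_self _ p)
    exact .inl ⟨_, hD, Cᶜ, C, hB, hpC, h⟩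

/-- If some vertex of spin `s` is not enclosed, then every vertex of another spin is, by
`enclosed_or_enclosed_of_notMem_componentIn`. -/
theorem card_filter_eq_le_card_filter_enclosed (hG : G.Connected) (σ : V → ℤ) (s : ℤ)
    (hs : 2 * #{v | σ v = s} ≤ Fintype.card V) :
    #{v | σ v = s} ≤ #{p | Enclosed G σ p} := by
  by_cases hall : ∀ p, σ p = s → Enclosed G σ p
  · exact card_le_card fun p hp => by simp_all
  push Not at hall
  obtain ⟨p, hps, hp⟩ := hall
  have hsub : univ.filter (fun v => ¬σ v = s) ⊆ univ.filter (fun p => Enclosed G σ p) := by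
    intro q hq
    simp only [mem_filter, mem_univ, true_and] at hq ⊢
    have hq' : q ∉ componentIn G {v | σ v = σ p} p := fun h =>
      hq (hps ▸ componentIn_subset (S := {v | σ v = σ p}) rfl h)
    exact (enclosed_or_enclosed_of_notMem_componentIn hG σ hq').resolve_left hp
  have := card_le_card hsub
  have := card_filter_add_card_filter_not (s := univ) (fun v => σ v = s)
  rw [card_univ] at this
  omega

theorem sum_eq_of_isSpin {σ : V → ℤ} (hσ : IsSpin σ) :
    ∑ i, (σ i : ℝ) = #{v | σ v = 1} - #{v | σ v = -1} := by
  have h : ∀ i, (σ i : ℝ) = (if σ i = 1 then 1 else 0) - (if σ i = -1 then 1 else 0) := by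
    intro i
    rcases hσ i with h | h <;> simp [h]
  rw [sum_congr rfl fun i _ => h i, sum_sub_distrib, sum_boole, sum_boole]

theorem card_add_card_of_isSpin {σ : V → ℤ} (hσ : IsSpin σ) :
    #{v | σ v = 1} + #{v | σ v = -1} = Fintype.card V := by
  have h : univ.filter (fun v => σ v = -1) = univ.filter (fun v => ¬σ v = 1) := by
    ext v
    rcases hσ v with h | h <;> simp [h]
  rw [h, card_filter_add_card_filter_not, card_univ]

theorem card_mul_abs_magn (σ : V → ℤ) :
    (Fintype.card V : ℝ) * |magn σ| = |∑ i, (σ i : ℝ)| := by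
  rcases isEmpty_or_nonempty V with hV | hV
  · simp
  · rw [magn, abs_div, Nat.abs_cast, mul_div_cancel₀ _ (by positivity)]

/-- With `a` and `b` the numbers of `+1` and `-1` spins, `n (1 - |M|) = n - |a - b| = 2 min a b`. -/
theorem card_mul_one_sub_abs_magn_le (hG : G.Connected) {σ : V → ℤ} (hσ : IsSpin σ) :
    (Fintype.card V : ℝ) * (1 - |magn σ|) ≤ 2 * #{p | Enclosed G σ p} := by
  set a := #{v | σ v = 1}
  set b := #{v | σ v = -1}
  set k := #{p | Enclosed G σ p}
  have hab : a + b = Fintype.card V := card_add_card_of_isSpin hσ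
  rw [mul_one_sub, card_mul_abs_magn, sum_eq_of_isSpin hσ, ← hab]
  push_cast
  have h₁ := neg_abs_le ((a : ℝ) - b)
  have h₂ := le_abs_self ((a : ℝ) - b)
  rcases le_total a b with h | h
  · have : (a : ℝ) ≤ k := by
      exact_mod_cast card_filter_eq_le_card_filter_enclosed hG σ 1 (by omega)
    linarith
  · have : (b : ℝ) ≤ k := by
      exact_mod_cast card_filter_eq_le_card_filter_enclosed hG σ (-1) (by omega)
    linarith

end Counting

section Flip

noncomputable def flipOn (P : Set V) (τ : V → Bool) : V → Bool :=
  fun v => if v ∈ P then !τ v else τ v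

theorem flipOn_involutive (P : Set V) : Function.Involutive (flipOn P) := by
  intro τ
  funext v
  by_cases h : v ∈ P <;> simp [flipOn, h]

theorem toSpin_flipOn (P : Set V) (τ : V → Bool) (v : V) :
    toSpin (flipOn P τ) v = if v ∈ P then -toSpin τ v else toSpin τ v := by
  by_cases h : v ∈ P <;> cases hv : τ v <;> simp [toSpin, flipOn, h, hv]

theorem isSpin_toSpin (τ : V → Bool) : IsSpin (toSpin τ) := by
  intro v
  by_cases h : τ v <;> simp [toSpin, h]

theorem spinProd_eq_neg_one_of_disagrees {σ : V → ℤ} (hσ : IsSpin σ) {e : Sym2 V}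
    (h : Disagrees σ e) : spinProd σ e = -1 := by
  induction e using Sym2.ind with
  | _ i j =>
    change σ i ≠ σ j at h
    change σ i * σ j = -1
    rcases hσ i with hi | hi <;> rcases hσ j with hj | hj <;> simp_all

variable {G : SimpleGraph V} {B : Finset (Sym2 V)} {P₁ P₂ : Set V}

theorem IsBorderWith.spinProd_toSpin_flipOn (hB : IsBorderWith G ↑B P₁ P₂) (τ : V → Bool)
    {e : Sym2 V} (he : e ∈ G.edgeSet) :
    spinProd (toSpin (flipOn P₁ τ)) e =
      if e ∈ B then -spinProd (toSpin τ) e else spinProd (toSpin τ) e := by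
  induction e using Sym2.ind with
  | _ i j =>
    have hmem : s(i, j) ∈ B ↔ ¬(i ∈ P₁ ↔ j ∈ P₁) := hB.mk_mem_iff he
    change toSpin (flipOn P₁ τ) i * toSpin (flipOn P₁ τ) j =
      if s(i, j) ∈ B then -(toSpin τ i * toSpin τ j) else toSpin τ i * toSpin τ j
    simp only [toSpin_flipOn, hmem]
    split_ifs <;> first | (exfalso; tauto) | ring

variable [Fintype V] [Fintype G.edgeSet]

theorem IsBorderWith.hamiltonian_toSpin_flipOn (J : Sym2 V → ℝ) (hB : IsBorderWith G ↑B P₁ P₂)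
    (τ : V → Bool) :
    hamiltonian G J (toSpin (flipOn P₁ τ)) =
      hamiltonian G J (toSpin τ) + 2 * ∑ e ∈ B, J e * spinProd (toSpin τ) e := by
  have hBE : B ⊆ G.edgeFinset := fun e he => SimpleGraph.mem_edgeFinset.mpr (hB.subset_edgeSet he)
  have h : ∀ e ∈ G.edgeFinset, J e * (spinProd (toSpin (flipOn P₁ τ)) e : ℝ) =
      J e * spinProd (toSpin τ) e - 2 * if e ∈ B then J e * spinProd (toSpin τ) e else 0 := by
    intro e he
    rw [hB.spinProd_toSpin_flipOn τ (SimpleGraph.mem_edgeFinset.mp he)]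
    split_ifs <;> push_cast <;> ring
  rw [hamiltonian, hamiltonian, sum_congr rfl h, sum_sub_distrib, ← mul_sum,
    sum_ite_mem, inter_eq_right.mpr hBE]
  ring

theorem IsBorderWith.hamiltonian_toSpin_flipOn_add_le {J : Sym2 V → ℝ} {Jmin : ℝ}
    (hJ : ∀ e ∈ G.edgeFinset, Jmin ≤ J e) (hB : IsBorderWith G ↑B P₁ P₂) {τ : V → Bool}
    (hτ : ↑B ⊆ disagreeSet G (toSpin τ)) :
    hamiltonian G J (toSpin (flipOn P₁ τ)) + 2 * Jmin * B.card ≤ hamiltonian G J (toSpin τ) := by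
  have hsum : ∑ e ∈ B, J e * (spinProd (toSpin τ) e : ℝ) = -∑ e ∈ B, J e := by
    rw [← sum_neg_distrib]
    refine sum_congr rfl fun e he => ?_
    rw [spinProd_eq_neg_one_of_disagrees (isSpin_toSpin τ) (hτ he).2]
    simp
  have hcard : B.card • Jmin ≤ ∑ e ∈ B, J e :=
    card_nsmul_le_sum B J Jmin fun e he =>
      hJ e (SimpleGraph.mem_edgeFinset.mpr (hB.subset_edgeSet he))
  rw [nsmul_eq_mul] at hcard
  rw [hB.hamiltonian_toSpin_flipOn, hsum]
  linarith

end Flip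

section Gibbs

variable [Fintype V] [DecidableEq V] {G : SimpleGraph V} [Fintype G.edgeSet] {J : Sym2 V → ℝ}
  {β : ℝ}

theorem partitionZ_pos : 0 < partitionZ G J β :=
  sum_pos (fun _ _ => Real.exp_pos _) univ_nonempty

theorem gibbsExp_const (c : ℝ) : gibbsExp G J β (fun _ => c) = c := by
  rw [gibbsExp, ← mul_sum, ← partitionZ, mul_div_cancel_right₀ _ partitionZ_pos.ne']

theorem gibbsExp_sub (f g : (V → ℤ) → ℝ) :
    gibbsExp G J β (fun σ => f σ - g σ) = gibbsExp G J β f - gibbsExp G J β g := by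
  simp only [gibbsExp, sub_mul, sum_sub_distrib, sub_div]

theorem gibbsExp_const_mul (c : ℝ) (f : (V → ℤ) → ℝ) :
    gibbsExp G J β (fun σ => c * f σ) = c * gibbsExp G J β f := by
  simp only [gibbsExp, mul_assoc, ← mul_sum, mul_div_assoc]

theorem gibbsExp_sum {ι : Type*} (s : Finset ι) (f : ι → (V → ℤ) → ℝ) :
    gibbsExp G J β (fun σ => ∑ i ∈ s, f i σ) = ∑ i ∈ s, gibbsExp G J β (f i) := by
  simp only [gibbsExp, sum_mul, ← sum_div]
  rw [sum_comm]

theorem gibbsExp_mono {f g : (V → ℤ) → ℝ} (h : ∀ τ : V → Bool, f (toSpin τ) ≤ g (toSpin τ)) :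
    gibbsExp G J β f ≤ gibbsExp G J β g :=
  div_le_div_of_nonneg_right
    (sum_le_sum fun τ _ => mul_le_mul_of_nonneg_right (h τ) (Real.exp_pos _).le)
    partitionZ_pos.le

theorem gibbsProb_exists_le_sum {ι : Type*} (s : Finset ι) (S : ι → (V → ℤ) → Prop) :
    gibbsProb G J β (fun σ => ∃ i ∈ s, S i σ) ≤ ∑ i ∈ s, gibbsProb G J β (S i) := by
  simp only [gibbsProb, ← gibbsExp_sum]
  refine gibbsExp_mono fun τ => ?_
  split_ifs with h
  · obtain ⟨i, hi, hS⟩ := h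
    exact (if_pos hS).symm.le.trans
      (single_le_sum (f := fun i => if S i (toSpin τ) then (1 : ℝ) else 0)
        (fun _ _ => by positivity) hi)
  · exact sum_nonneg fun _ _ => by positivity

/-- Peierls' estimate: flipping the side `P₁` maps the configurations having `B` among their
disagreement edges injectively to configurations of weight at least `exp (2 β Jmin |B|)` times
larger. -/
theorem IsBorderWith.gibbsProb_subset_disagreeSet_le {Jmin : ℝ} (hβ : 0 ≤ β)
    (hJ : ∀ e ∈ G.edgeFinset, Jmin ≤ J e) {B : Finset (Sym2 V)} {P₁ P₂ : Set V}
    (hB : IsBorderWith G ↑B P₁ P₂) :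
    gibbsProb G J β (fun σ => ↑B ⊆ disagreeSet G σ) ≤ Real.exp (-2 * β * Jmin * B.card) := by
  set w : (V → Bool) → ℝ := fun τ => Real.exp (-β * hamiltonian G J (toSpin τ))
  set S := univ.filter fun τ : V → Bool => ↑B ⊆ disagreeSet G (toSpin τ)
  have hflip : ∀ τ ∈ S, w τ ≤ Real.exp (-2 * β * Jmin * B.card) * w (flipOn P₁ τ) := by
    intro τ hτ
    have := hB.hamiltonian_toSpin_flipOn_add_le hJ (mem_filter.mp hτ).2
    rw [← Real.exp_add]
    exact Real.exp_le_exp.mpr (by nlinarith)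
  rw [gibbsProb, gibbsExp, div_le_iff₀ partitionZ_pos]
  calc ∑ τ, (if ↑B ⊆ disagreeSet G (toSpin τ) then (1 : ℝ) else 0) * w τ
      = ∑ τ ∈ S, w τ := by simp only [ite_mul, one_mul, zero_mul, sum_filter, S]
    _ ≤ ∑ τ ∈ S, Real.exp (-2 * β * Jmin * B.card) * w (flipOn P₁ τ) := sum_le_sum hflip
    _ = Real.exp (-2 * β * Jmin * B.card) * ∑ τ ∈ S.image (flipOn P₁), w τ := by
      rw [mul_sum, sum_image (flipOn_involutive P₁).injective.injOn]
    _ ≤ Real.exp (-2 * β * Jmin * B.card) * partitionZ G J β := by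
      gcongr
      exact sum_le_sum_of_subset_of_nonneg (subset_univ _) fun _ _ _ => (Real.exp_pos _).le

end Gibbs

section UnionBound

variable [Fintype V] {G : SimpleGraph V}

variable (G) in
noncomputable def internalBorders (p : V) : Finset (Finset (Sym2 V)) :=
  univ.filter fun B => InternalTo G p ↑B

theorem mu_eq_card_filter_internalBorders (p : V) (b : ℕ) :
    mu G p b = #{B ∈ internalBorders G p | B.card = b} := by
  rw [mu, ← Set.ncard_coe_finset]
  congr 1
  ext B
  simp [internalBorders, and_comm]

theorem sum_internalBorders_eq [Fintype G.edgeSet] (hG : G.Connected) (p : V) (f : ℕ → ℝ) :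
    ∑ B ∈ internalBorders G p, f B.card =
      ∑ b ∈ Icc 1 G.edgeFinset.card, (mu G p b : ℝ) * f b := by
  have hmaps : ∀ B ∈ internalBorders G p, B.card ∈ Icc 1 G.edgeFinset.card := by
    intro B hB
    obtain ⟨P₁, P₂, hB, -⟩ := (mem_filter.mp hB).2
    refine mem_Icc.mpr ⟨card_pos.mpr (by exact_mod_cast hB.nonempty hG), card_le_card ?_⟩
    exact fun e he => SimpleGraph.mem_edgeFinset.mpr (hB.subset_edgeSet he)
  rw [← sum_fiberwise_of_maps_to hmaps]
  refine sum_congr rfl fun b _ => ?_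
  rw [sum_congr rfl fun B hB => by rw [(mem_filter.mp hB).2], sum_const, nsmul_eq_mul,
    mu_eq_card_filter_internalBorders]

variable [DecidableEq V] [Fintype G.edgeSet] {J : Sym2 V → ℝ} {β : ℝ}

theorem gibbsProb_enclosed_le (hG : G.Connected) {Jmin : ℝ} (hβ : 0 ≤ β)
    (hJ : ∀ e ∈ G.edgeFinset, Jmin ≤ J e) (p : V) :
    gibbsProb G J β (fun σ => Enclosed G σ p) ≤
      ∑ b ∈ Icc 1 G.edgeFinset.card, (mu G p b : ℝ) * Real.exp (-2 * β * Jmin * b) := by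
  calc gibbsProb G J β (fun σ => Enclosed G σ p)
      = gibbsProb G J β (fun σ => ∃ B ∈ internalBorders G p, ↑B ⊆ disagreeSet G σ) := by
        simp only [Enclosed, internalBorders, mem_filter, mem_univ, true_and, and_comm]
    _ ≤ ∑ B ∈ internalBorders G p, gibbsProb G J β (fun σ => ↑B ⊆ disagreeSet G σ) :=
        gibbsProb_exists_le_sum _ _
    _ ≤ ∑ B ∈ internalBorders G p, Real.exp (-2 * β * Jmin * B.card) := by
        refine sum_le_sum fun B hB => ?_
        obtain ⟨P₁, P₂, hB, -⟩ := (mem_filter.mp hB).2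
        exact hB.gibbsProb_subset_disagreeSet_le hβ hJ
    _ = _ := sum_internalBorders_eq hG p fun b => Real.exp (-2 * β * Jmin * b)

end UnionBound

theorem stmt_7_general {V : Type*} [Fintype V] [DecidableEq V] (G : SimpleGraph V)
    [DecidableRel G.Adj] (hG : G.Connected)
    (J : Sym2 V → ℝ) (Jmin : ℝ)
    (hJ : ∀ e ∈ G.edgeFinset, Jmin ≤ J e) (β : ℝ) (hβ : 0 < β) :
    gibbsExp G J β (fun σ => |magn σ|) ≥
      1 - (4 / (Fintype.card V : ℝ)) * ∑ p : V, ∑ b ∈ Finset.Icc 1 G.edgeFinset.card,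
        (mu G p b : ℝ) * Real.exp (-2 * β * Jmin * (b : ℝ)) := by
  have : Nonempty V := hG.nonempty
  have hn : (0 : ℝ) < Fintype.card V := by exact_mod_cast Fintype.card_pos
  calc 1 - 4 / (Fintype.card V : ℝ) * ∑ p : V, ∑ b ∈ Finset.Icc 1 G.edgeFinset.card,
        (mu G p b : ℝ) * Real.exp (-2 * β * Jmin * (b : ℝ))
      ≤ 1 - 4 / (Fintype.card V : ℝ) * ∑ p : V, gibbsProb G J β (Enclosed G · p) := by
        gcongr with p
        exact gibbsProb_enclosed_le hG hβ.le hJ p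
    _ = gibbsExp G J β
          (fun σ => 1 - 4 / (Fintype.card V : ℝ) *
            ∑ p : V, if Enclosed G σ p then 1 else 0) := by
        rw [gibbsExp_sub, gibbsExp_const, gibbsExp_const_mul, gibbsExp_sum]
        rfl
    _ ≤ gibbsExp G J β (fun σ => |magn σ|) := gibbsExp_mono fun τ => by
        have h := card_mul_one_sub_abs_magn_le hG (isSpin_toSpin τ)
        rw [← sum_boole] at h
        have hI : 0 ≤ ∑ p : V, if Enclosed G (toSpin τ) p then (1 : ℝ) else 0 :=
          sum_nonneg fun _ _ => by positivity
        rw [div_mul_eq_mul_div, sub_le_comm, le_div_iff₀ hn]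
        linarith

/-- finite-volume generalized Peierls–Griffiths bound:
`E_β[|M|] ≥ 1 − (4/|V|) Σ_{p∈V} Σ_{b=1}^{|E|} μ^p(b) · exp (−2 β Jmin b)`. -/
theorem stmt_7 {V : Type*} [Fintype V] [DecidableEq V] (G : SimpleGraph V)
    [DecidableRel G.Adj] (hG : G.Connected)
    (J : Sym2 V → ℝ) (Jmin : ℝ) (hJmin : 0 < Jmin)
    (hJ : ∀ e ∈ G.edgeFinset, Jmin ≤ J e) (β : ℝ) (hβ : 0 < β) :
    gibbsExp G J β (fun σ => |magn σ|) ≥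
      1 - (4 / (Fintype.card V : ℝ)) * ∑ p : V, ∑ b ∈ Finset.Icc 1 G.edgeFinset.card,
        (mu G p b : ℝ) * Real.exp (-2 * β * Jmin * (b : ℝ)) :=
  stmt_7_general G hG J Jmin hJ β hβ

end PG
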